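/- arXiv:1009.0086 — 2 statements merged into one kernel-verified Lean document; each statement's English description precedes it below -/
import Mathlib

section
/- With B_θ as above, the closed unit ball {w ∈ B_θ : ‖w‖_θ ≤ c} is compact in the L¹(μ) topology, for any c > 0. -/
open MeasureTheory Filter ENNReal

noncomputable section

/-- The left shift on one-sided sequences. -/
def shiftSeq {α : Type*} : (ℕ → α) → ℕ → α := fun x n => x (n + 1)

/-- The cylinder of length `n` centred at `x`. -/
def cyl {α : Type*} (x : ℕ → α) (n : ℕ) : Set (ℕ → α) := {y | ∀ i < n, y i = x i}

/-- `osc(w, m, x)`: the essential supremum of `|w(y) − w(z)|` over `y, z` in the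
cylinder `[x]_m` (with respect to `μ`). -/
def oscE {α : Type*} [MeasurableSpace α] (μ : Measure (ℕ → α))
    (w : (ℕ → α) → ℝ) (m : ℕ) (x : ℕ → α) : ℝ≥0∞ :=
  essSup (fun p : (ℕ → α) × (ℕ → α) => ENNReal.ofReal |w p.1 - w p.2|)
    ((μ.restrict (cyl x m)).prod (μ.restrict (cyl x m)))

/-- The seminorm `|w|_θ = sup_{m ≥ 1} θ^{-m} ∫ osc(w, m, ·) dμ`. -/
def thetaSemi {α : Type*} [MeasurableSpace α] (μ : Measure (ℕ → α)) (θ : ℝ)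
    (w : (ℕ → α) → ℝ) : ℝ≥0∞ :=
  ⨆ m : ℕ, ⨆ _ : 1 ≤ m, (ENNReal.ofReal θ ^ m)⁻¹ * ∫⁻ x, oscE μ w m x ∂μ

/-- The norm `‖w‖_θ = |w|_θ + ‖w‖_{L¹(μ)}`. -/
def thetaNorm {α : Type*} [MeasurableSpace α] (μ : Measure (ℕ → α)) (θ : ℝ)
    (w : (ℕ → α) → ℝ) : ℝ≥0∞ :=
  thetaSemi μ θ w + ∫⁻ x, ENNReal.ofReal |w x| ∂μ

/-!
Let `E_m w = cylFun m (cylAvg μ w m)` be the average of `w` over the cylinders of length `m`. On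
each cylinder `|w - E_m w|` is essentially bounded by the oscillation, so
`‖w - E_m w‖_{L¹} ≤ ∫ osc(w, m, ·) dμ ≤ c θ^m` on the ball. As `E_m w` is determined by finitely
many bounded averages, the ball is totally bounded in the complete space `L¹(μ)`. It is also closed:
along an almost everywhere convergent subsequence, Fatou's lemma and the lower semicontinuity of
the essential oscillation bound the θ-norm of the limit.
-/

open Set Topology

lemma totallyBounded_of_forall_approx {X : Type*} [PseudoEMetricSpace X] {s : Set X}
    (h : ∀ ε > 0, ∃ t, TotallyBounded t ∧ ∀ x ∈ s, ∃ y ∈ t, edist x y < ε) :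
    TotallyBounded s := by
  rw [EMetric.totallyBounded_iff]
  intro ε hε
  obtain ⟨t, ht, hst⟩ := h (ε / 2) (ENNReal.half_pos hε.ne')
  obtain ⟨N, hN, htN⟩ := EMetric.totallyBounded_iff.1 ht (ε / 2) (ENNReal.half_pos hε.ne')
  refine ⟨N, hN, fun x hx => ?_⟩
  obtain ⟨y, hyt, hxy⟩ := hst x hx
  obtain ⟨z, hzN, hyz⟩ := mem_iUnion₂.1 (htN hyt)
  refine mem_iUnion₂.2 ⟨z, hzN, ?_⟩
  calc edist x z ≤ edist x y + edist y z := edist_triangle x y z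
    _ < ε / 2 + ε / 2 := ENNReal.add_lt_add hxy hyz
    _ = ε := ENNReal.add_halves ε

lemma ENNReal.le_liminf_add (u v : ℕ → ℝ≥0∞) :
    liminf u atTop + liminf v atTop ≤ liminf (fun j => u j + v j) atTop := by
  simp only [liminf_eq_iSup_iInf_of_nat]
  exact ENNReal.iSup_add_iSup_le fun i j => le_iSup_of_le (max i j) <| le_iInf₂ fun k hk =>
    add_le_add (iInf₂_le k (le_of_max_le_left hk)) (iInf₂_le k (le_of_max_le_right hk))

lemma essSup_le_liminf_of_ae_tendsto {β : Type*} [MeasurableSpace β] {ν : Measure β}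
    {u : ℕ → β → ℝ≥0∞} {v : β → ℝ≥0∞}
    (h : ∀ᵐ p ∂ν, Tendsto (fun j => u j p) atTop (𝓝 (v p))) :
    essSup v ν ≤ liminf (fun j => essSup (u j) ν) atTop := by
  refine essSup_le_of_ae_le _ ?_
  filter_upwards [h, ae_all_iff.2 fun j => ae_le_essSup (u j)] with p hp hle
  rw [← hp.liminf_eq]
  exact liminf_le_liminf (Eventually.of_forall hle)

lemma ae_prod_self_of_ae {β : Type*} [MeasurableSpace β] {ν : Measure β} [SFinite ν]
    {P : β → Prop} (h : ∀ᵐ y ∂ν, P y) : ∀ᵐ p ∂ν.prod ν, P p.1 ∧ P p.2 :=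
  (Measure.quasiMeasurePreserving_fst.ae h).and (Measure.quasiMeasurePreserving_snd.ae h)

lemma ae_abs_sub_average_le_essSup {β : Type*} [MeasurableSpace β] {ν : Measure β}
    [IsFiniteMeasure ν] {w : β → ℝ} (hw : Integrable w ν) :
    ∀ᵐ y ∂ν, ENNReal.ofReal |w y - ⨍ z, w z ∂ν| ≤
      essSup (fun p : β × β => ENNReal.ofReal |w p.1 - w p.2|) (ν.prod ν) := by
  set M := essSup (fun p : β × β => ENNReal.ofReal |w p.1 - w p.2|) (ν.prod ν)
  rcases eq_or_ne ν 0 with rfl | hν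
  · simp
  rcases eq_or_ne M ∞ with hM | hM
  · simp [hM]
  have : NeZero ν := ⟨hν⟩
  filter_upwards [Measure.ae_ae_of_ae_prod (μ := ν) (ν := ν) (ae_le_essSup _)] with y hy
  -- by convexity, the average stays in any closed ball that contains almost all values of `w`
  have hmem : ⨍ z, w z ∂ν ∈ Metric.closedBall (w y) M.toReal := by
    refine (convex_closedBall _ _).average_mem Metric.isClosed_closedBall ?_ hw
    filter_upwards [hy] with z hz
    rw [Metric.mem_closedBall, Real.dist_eq, abs_sub_comm]
    exact (ENNReal.ofReal_le_iff_le_toReal hM).1 hz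
  rw [Metric.mem_closedBall, Real.dist_eq, abs_sub_comm] at hmem
  exact (ENNReal.ofReal_le_ofReal hmem).trans_eq (ENNReal.ofReal_toReal hM)

lemma abs_setAverage_le_integral_abs_div {β : Type*} [MeasurableSpace β] {μ : Measure β}
    {w : β → ℝ} (hw : Integrable w μ) (s : Set β) :
    |⨍ x in s, w x ∂μ| ≤ (∫ x, |w x| ∂μ) / μ.real s := by
  rw [setAverage_eq, smul_eq_mul, abs_mul, abs_inv, abs_of_nonneg measureReal_nonneg,
    inv_mul_eq_div]
  gcongr
  exact abs_integral_le_integral_abs.trans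
    (setIntegral_le_integral hw.abs (ae_of_all _ fun _ => abs_nonneg _))

lemma edist_eq_lintegral_abs_sub {β : Type*} [MeasurableSpace β] {μ : Measure β}
    (F G : β →₁[μ] ℝ) : edist F G = ∫⁻ x, ENNReal.ofReal |F x - G x| ∂μ := by
  simp only [Lp.edist_def, eLpNorm_one_eq_lintegral_enorm, Pi.sub_apply, Real.enorm_eq_ofReal_abs]

section Cylinders

variable {α : Type*}

def initWord (m : ℕ) (x : ℕ → α) : Fin m → α := fun i => x i

def wordCyl {m : ℕ} (a : Fin m → α) : Set (ℕ → α) := initWord m ⁻¹' {a}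

def cylFun {β : Type*} (m : ℕ) (v : (Fin m → α) → β) (x : ℕ → α) : β := v (initWord m x)

lemma mem_wordCyl {m : ℕ} {a : Fin m → α} {y : ℕ → α} : y ∈ wordCyl a ↔ initWord m y = a :=
  Iff.rfl

lemma cyl_eq_wordCyl (x : ℕ → α) (m : ℕ) : cyl x m = wordCyl (initWord m x) := by
  ext y
  simp only [cyl, mem_ofPred_eq, mem_wordCyl, funext_iff, initWord, Fin.forall_iff]

variable [MeasurableSpace α]

def cylAvg (μ : Measure (ℕ → α)) (w : (ℕ → α) → ℝ) (m : ℕ) (a : Fin m → α) : ℝ :=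
  ⨍ y in wordCyl a, w y ∂μ

lemma measurable_initWord (m : ℕ) : Measurable (initWord (α := α) m) :=
  measurable_pi_lambda _ fun _ => measurable_pi_apply _

variable [MeasurableSingletonClass α]

lemma measurableSet_wordCyl {m : ℕ} (a : Fin m → α) : MeasurableSet (wordCyl a) :=
  measurable_initWord m (measurableSet_singleton a)

variable [Countable α]

lemma measurable_cylFun {β : Type*} [MeasurableSpace β] (m : ℕ) (v : (Fin m → α) → β) :
    Measurable (cylFun m v) :=
  (measurable_of_countable v).comp (measurable_initWord m)

lemma lintegral_eq_tsum_wordCyl (μ : Measure (ℕ → α)) (m : ℕ) (h : (ℕ → α) → ℝ≥0∞) :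
    ∫⁻ x, h x ∂μ = ∑' a : Fin m → α, ∫⁻ x in wordCyl a, h x ∂μ := by
  rw [← lintegral_iUnion measurableSet_wordCyl (pairwise_disjoint_fiber _) h]
  simp [wordCyl, ← preimage_iUnion, iUnion_of_singleton]

end Cylinders

section ThetaNorm

variable {α : Type*} [MeasurableSpace α] {μ : Measure (ℕ → α)} {θ : ℝ}

lemma oscE_eq_cylFun (w : (ℕ → α) → ℝ) (m : ℕ) :
    oscE μ w m = cylFun m fun a => essSup (fun p : (ℕ → α) × (ℕ → α) =>
      ENNReal.ofReal |w p.1 - w p.2|) ((μ.restrict (wordCyl a)).prod (μ.restrict (wordCyl a))) :=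
  funext fun x => by rw [oscE, cyl_eq_wordCyl]; rfl

lemma measurable_oscE [MeasurableSingletonClass α] [Countable α] (w : (ℕ → α) → ℝ) (m : ℕ) :
    Measurable (oscE μ w m) := by
  rw [oscE_eq_cylFun]
  exact measurable_cylFun m _

lemma lintegral_abs_sub_cylAvg_le [MeasurableSingletonClass α] [Countable α] [IsFiniteMeasure μ]
    {w : (ℕ → α) → ℝ} (hw : Integrable w μ) (m : ℕ) :
    ∫⁻ x, ENNReal.ofReal |w x - cylFun m (cylAvg μ w m) x| ∂μ ≤ ∫⁻ x, oscE μ w m x ∂μ := by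
  rw [lintegral_eq_tsum_wordCyl μ m, lintegral_eq_tsum_wordCyl μ m]
  refine ENNReal.tsum_le_tsum fun a => ?_
  calc ∫⁻ x in wordCyl a, ENNReal.ofReal |w x - cylFun m (cylAvg μ w m) x| ∂μ
      = ∫⁻ x in wordCyl a, ENNReal.ofReal |w x - ⨍ y in wordCyl a, w y ∂μ| ∂μ :=
        setLIntegral_congr_fun (measurableSet_wordCyl a) fun x hx => by
          simp only [cylFun, cylAvg, mem_wordCyl.1 hx]
    _ ≤ ∫⁻ x in wordCyl a, oscE μ w m x ∂μ := by
        refine (lintegral_mono_ae (ae_abs_sub_average_le_essSup hw.restrict)).trans_eq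
          (setLIntegral_congr_fun (measurableSet_wordCyl a) fun x hx => ?_)
        rw [oscE_eq_cylFun, cylFun, mem_wordCyl.1 hx]

lemma thetaNorm_le_iff {w : (ℕ → α) → ℝ} {C : ℝ≥0∞} :
    thetaNorm μ θ w ≤ C ↔ ∫⁻ x, ENNReal.ofReal |w x| ∂μ ≤ C ∧
      ∀ m, 1 ≤ m → (ENNReal.ofReal θ ^ m)⁻¹ * ∫⁻ x, oscE μ w m x ∂μ +
        ∫⁻ x, ENNReal.ofReal |w x| ∂μ ≤ C := by
  refine ⟨fun h => ⟨le_add_self.trans h, fun m hm =>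
    (add_le_add_left (le_iSup₂_of_le m hm le_rfl) _).trans h⟩, fun ⟨h0, h⟩ => ?_⟩
  rw [thetaNorm, thetaSemi, ENNReal.iSup_add]
  refine iSup_le fun m => ?_
  by_cases hm : 1 ≤ m
  · simpa [hm] using h m hm
  · simpa [hm] using h0

lemma lintegral_oscE_le_of_thetaNorm_le {w : (ℕ → α) → ℝ} {C : ℝ≥0∞} (hC : C ≠ ∞)
    (hw : thetaNorm μ θ w ≤ C) {m : ℕ} (hm : 1 ≤ m) :
    ∫⁻ x, oscE μ w m x ∂μ ≤ C * ENNReal.ofReal θ ^ m := by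
  have h := (le_self_add.trans ((thetaNorm_le_iff.1 hw).2 m hm))
  rwa [← ENNReal.div_eq_inv_mul, ENNReal.div_le_iff_le_mul (Or.inr hC)
    (Or.inl (ENNReal.pow_ne_top ENNReal.ofReal_ne_top))] at h

lemma integrable_of_thetaNorm_ne_top {w : (ℕ → α) → ℝ} (hw : AEStronglyMeasurable w μ)
    (h : thetaNorm μ θ w ≠ ∞) : Integrable w μ :=
  ⟨hw, by
    simp only [HasFiniteIntegral, Real.enorm_eq_ofReal_abs]
    exact (le_add_self.trans_lt h.lt_top)⟩

lemma thetaNorm_congr_ae [SFinite μ] {w w' : (ℕ → α) → ℝ} (h : w =ᵐ[μ] w') :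
    thetaNorm μ θ w = thetaNorm μ θ w' := by
  have hosc : oscE μ w = oscE μ w' := by
    ext m x
    refine essSup_congr_ae ?_
    filter_upwards [ae_prod_self_of_ae (ae_restrict_of_ae h)] with p hp
    rw [hp.1, hp.2]
  rw [thetaNorm, thetaNorm, thetaSemi, thetaSemi, hosc,
    lintegral_congr_ae (h.mono fun x hx => by rw [hx])]

lemma oscE_le_liminf_of_ae_tendsto [SFinite μ] {w : ℕ → (ℕ → α) → ℝ} {F : (ℕ → α) → ℝ}
    (hlim : ∀ᵐ x ∂μ, Tendsto (fun j => w j x) atTop (𝓝 (F x))) (m : ℕ) (x : ℕ → α) :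
    oscE μ F m x ≤ liminf (fun j => oscE μ (w j) m x) atTop := by
  refine essSup_le_liminf_of_ae_tendsto ?_
  filter_upwards [ae_prod_self_of_ae (ae_restrict_of_ae hlim)] with p hp
  exact ENNReal.tendsto_ofReal (hp.1.sub hp.2).abs

lemma thetaNorm_le_of_ae_tendsto [MeasurableSingletonClass α] [Countable α] [SFinite μ]
    {w : ℕ → (ℕ → α) → ℝ} {F : (ℕ → α) → ℝ} {C : ℝ≥0∞} (hw : ∀ j, AEMeasurable (w j) μ)
    (hlim : ∀ᵐ x ∂μ, Tendsto (fun j => w j x) atTop (𝓝 (F x)))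
    (hC : ∀ j, thetaNorm μ θ (w j) ≤ C) : thetaNorm μ θ F ≤ C := by
  have hL1 : ∫⁻ x, ENNReal.ofReal |F x| ∂μ ≤
      liminf (fun j => ∫⁻ x, ENNReal.ofReal |w j x| ∂μ) atTop := by
    calc ∫⁻ x, ENNReal.ofReal |F x| ∂μ
        = ∫⁻ x, liminf (fun j => ENNReal.ofReal |w j x|) atTop ∂μ :=
          lintegral_congr_ae (hlim.mono fun x hx => (ENNReal.tendsto_ofReal hx.abs).liminf_eq.symm)
      _ ≤ _ := lintegral_liminf_le' fun j => (hw j).abs.ennreal_ofReal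
  have hosc (m : ℕ) : ∫⁻ x, oscE μ F m x ∂μ ≤
      liminf (fun j => ∫⁻ x, oscE μ (w j) m x ∂μ) atTop :=
    (lintegral_mono (oscE_le_liminf_of_ae_tendsto hlim m)).trans
      (lintegral_liminf_le fun j => measurable_oscE (w j) m)
  refine thetaNorm_le_iff.2 ⟨hL1.trans ?_, fun m hm => ?_⟩
  · exact liminf_le_of_frequently_le' (Frequently.of_forall fun j => (thetaNorm_le_iff.1 (hC j)).1)
  set c := (ENNReal.ofReal θ ^ m)⁻¹
  calc c * ∫⁻ x, oscE μ F m x ∂μ + ∫⁻ x, ENNReal.ofReal |F x| ∂μ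
      ≤ liminf (fun _ => c) atTop * liminf (fun j => ∫⁻ x, oscE μ (w j) m x ∂μ) atTop +
          liminf (fun j => ∫⁻ x, ENNReal.ofReal |w j x| ∂μ) atTop := by
        rw [liminf_const]; gcongr; exact hosc m
    _ ≤ liminf (fun j => c * ∫⁻ x, oscE μ (w j) m x ∂μ) atTop +
          liminf (fun j => ∫⁻ x, ENNReal.ofReal |w j x| ∂μ) atTop :=
        add_le_add_left ENNReal.le_liminf_mul _
    _ ≤ liminf (fun j => c * ∫⁻ x, oscE μ (w j) m x ∂μ + ∫⁻ x, ENNReal.ofReal |w j x| ∂μ) atTop :=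
        ENNReal.le_liminf_add _ _
    _ ≤ C := liminf_le_of_frequently_le'
        (Frequently.of_forall fun j => (thetaNorm_le_iff.1 (hC j)).2 m hm)

end ThetaNorm

def thetaNormBall {α : Type*} [MeasurableSpace α] (μ : Measure (ℕ → α)) (θ : ℝ) (C : ℝ≥0∞) :
    Set ((ℕ → α) →₁[μ] ℝ) :=
  {F | thetaNorm μ θ F ≤ C}

section L1

variable {α : Type*} [Fintype α] [MeasurableSpace α] [MeasurableSingletonClass α]
  (μ : Measure (ℕ → α)) [IsFiniteMeasure μ]

lemma integrable_cylFun (m : ℕ) (v : (Fin m → α) → ℝ) : Integrable (cylFun m v) μ :=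
  .of_bound (measurable_cylFun m v).aestronglyMeasurable ‖v‖
    (ae_of_all _ fun _ => norm_le_pi_norm v _)

def cylFunL1 (m : ℕ) (v : (Fin m → α) → ℝ) : (ℕ → α) →₁[μ] ℝ :=
  (integrable_cylFun μ m v).toL1 _

variable {μ} {θ : ℝ} {C : ℝ≥0∞}

lemma lipschitzWith_cylFunL1 (m : ℕ) : LipschitzWith (measureUnivNNReal μ) (cylFunL1 μ m) :=
  fun v v' => by
    rw [cylFunL1, cylFunL1, Integrable.edist_toL1_toL1, coe_measureUnivNNReal, mul_comm,
      ← lintegral_const]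
    exact lintegral_mono fun x => edist_le_pi_edist v v' _

lemma totallyBounded_thetaNormBall (hθ1 : θ < 1) (hC : C ≠ ∞) :
    TotallyBounded (thetaNormBall μ θ C) := by
  refine totallyBounded_of_forall_approx fun ε hε => ?_
  have hpow : Tendsto (fun m => C * ENNReal.ofReal θ ^ m) atTop (𝓝 0) := by
    simpa using ENNReal.Tendsto.const_mul
      (ENNReal.tendsto_pow_atTop_nhds_zero_of_lt_one (ENNReal.ofReal_lt_one.2 hθ1)) (.inr hC)
  obtain ⟨m, hm, hmε⟩ := ((eventually_ge_atTop 1).and (hpow.eventually (gt_mem_nhds hε))).exists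
  set r : (Fin m → α) → ℝ := fun a => C.toReal / μ.real (wordCyl a)
  refine ⟨cylFunL1 μ m '' univ.pi fun a => Icc (-r a) (r a),
    ((isCompact_univ_pi fun _ => isCompact_Icc).image
      (lipschitzWith_cylFunL1 m).continuous).totallyBounded, fun F hF => ?_⟩
  have hF1 : ∫ x, |F x| ∂μ ≤ C.toReal := by
    rw [integral_eq_lintegral_of_nonneg_ae (ae_of_all _ fun _ => abs_nonneg _)
      (Lp.aestronglyMeasurable F).norm]
    exact ENNReal.toReal_mono hC (thetaNorm_le_iff.1 hF).1
  refine ⟨_, mem_image_of_mem _ (mem_univ_pi.2 fun a => abs_le.1 <|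
    (abs_setAverage_le_integral_abs_div (L1.integrable_coeFn F) _).trans
      (div_le_div_of_nonneg_right hF1 measureReal_nonneg)), ?_⟩
  calc edist F (cylFunL1 μ m (cylAvg μ F m))
      = ∫⁻ x, ENNReal.ofReal |F x - cylFun m (cylAvg μ F m) x| ∂μ := by
        rw [edist_eq_lintegral_abs_sub]
        exact lintegral_congr_ae <| (Integrable.coeFn_toL1 _).mono fun x hx => by
          simp only [cylFunL1] at hx ⊢; rw [hx]
    _ ≤ ∫⁻ x, oscE μ F m x ∂μ := lintegral_abs_sub_cylAvg_le (L1.integrable_coeFn F) m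
    _ ≤ C * ENNReal.ofReal θ ^ m := lintegral_oscE_le_of_thetaNorm_le hC hF hm
    _ < ε := hmε

lemma isClosed_thetaNormBall : IsClosed (thetaNormBall μ θ C) := by
  refine isClosed_of_closure_subset fun F hF => ?_
  obtain ⟨u, hu, hlim⟩ := mem_closure_iff_seq_limit.1 hF
  obtain ⟨φ, -, hae⟩ := (tendstoInMeasure_of_tendsto_Lp hlim).exists_seq_tendsto_ae
  exact thetaNorm_le_of_ae_tendsto (fun j => (Lp.aestronglyMeasurable _).aemeasurable) hae
    fun j => hu (φ j)

lemma isCompact_thetaNormBall (hθ1 : θ < 1) (hC : C ≠ ∞) : IsCompact (thetaNormBall μ θ C) :=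
  (totallyBounded_thetaNormBall hθ1 hC).isCompact_of_isClosed isClosed_thetaNormBall

end L1

theorem thetaNorm_ball_L1_compact_general {l : ℕ} (θ : ℝ) (hθ1 : θ < 1)
    (μ : Measure (ℕ → Fin l)) [IsProbabilityMeasure μ]
    (c : ℝ)
    (f : ℕ → (ℕ → Fin l) → ℝ)
    (hmeas : ∀ k, Measurable (f k))
    (hball : ∀ k, thetaNorm μ θ (f k) ≤ ENNReal.ofReal c) :
    ∃ g : ℕ → ℕ, StrictMono g ∧
      ∃ flim : (ℕ → Fin l) → ℝ, Measurable flim ∧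
        thetaNorm μ θ flim ≤ ENNReal.ofReal c ∧
        Tendsto (fun k => ∫⁻ x, ENNReal.ofReal |f (g k) x - flim x| ∂μ)
          atTop (nhds 0) := by
  have hint (k : ℕ) : Integrable (f k) μ :=
    integrable_of_thetaNorm_ne_top (hmeas k).aestronglyMeasurable
      ((hball k).trans_lt ENNReal.ofReal_lt_top).ne
  have hmem (k : ℕ) : (hint k).toL1 (f k) ∈ thetaNormBall μ θ (ENNReal.ofReal c) :=
    (thetaNorm_congr_ae (Integrable.coeFn_toL1 (hint k))).trans_le (hball k)
  obtain ⟨F, hF, g, hg, hlim⟩ :=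
    (isCompact_thetaNormBall hθ1 ENNReal.ofReal_ne_top).tendsto_subseq hmem
  refine ⟨g, hg, F, (Lp.stronglyMeasurable F).measurable, hF, ?_⟩
  refine (tendsto_iff_edist_tendsto_0.1 hlim).congr fun k => ?_
  rw [Function.comp_apply, edist_eq_lintegral_abs_sub]
  exact lintegral_congr_ae <| (Integrable.coeFn_toL1 (hint (g k))).mono fun x hx => by
    simp only [hx]

/-- The ball `{w ∈ B_θ : ‖w‖_θ ≤ c}` is compact in the `L¹(μ)` topology:
every sequence in it has a subsequence converging in `L¹(μ)` to a member of the ball. -/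
theorem thetaNorm_ball_L1_compact {l : ℕ} (θ : ℝ) (hθ : 0 < θ) (hθ1 : θ < 1)
    (μ : Measure (ℕ → Fin l)) [IsProbabilityMeasure μ]
    (hfull : ∀ (x : ℕ → Fin l) (n : ℕ), 0 < μ (cyl x n))
    (c : ℝ) (hc : 0 < c)
    (f : ℕ → (ℕ → Fin l) → ℝ)
    (hmeas : ∀ k, Measurable (f k))
    (hball : ∀ k, thetaNorm μ θ (f k) ≤ ENNReal.ofReal c) :
    ∃ g : ℕ → ℕ, StrictMono g ∧
      ∃ flim : (ℕ → Fin l) → ℝ, Measurable flim ∧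
        thetaNorm μ θ flim ≤ ENNReal.ofReal c ∧
        Tendsto (fun k => ∫⁻ x, ENNReal.ofReal |f (g k) x - flim x| ∂μ)
          atTop (nhds 0) :=
  thetaNorm_ball_L1_compact_general θ hθ1 μ c f hmeas hball

end
end

section
/- Let L be the normalized transfer operator (L1 = 1) for a Hölder potential φ on a mixing subshift of finite type, with Gibbs measure μ. There exists c > 0 such that for every k ≥ 1 and w ∈ B_θ, |L^k w|_θ ≤ c(θ^k |w|_θ + ‖w‖_{L¹(μ)}). -/
open MeasureTheory Filter ENNReal

noncomputable section

/-- The Birkhoff sum `φⁿ(x)`. -/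
def birk {α : Type*} (φ : (ℕ → α) → ℝ) (n : ℕ) (x : ℕ → α) : ℝ :=
  ∑ i ∈ Finset.range n, φ (shiftSeq^[i] x)

/-- Prepend a symbol to a sequence. -/
def prepend {α : Type*} (a : α) (x : ℕ → α) : ℕ → α :=
  fun n => match n with
  | 0 => a
  | k + 1 => x k

/-- The transfer operator `(Lw)(x) = Σ_{σ y = x} e^{φ(y)} w(y)` of the subshift of finite
type given by the 0-1 matrix `A`. -/
def transfer {l : ℕ} (A : Fin l → Fin l → Bool) (φ : (ℕ → Fin l) → ℝ)
    (w : (ℕ → Fin l) → ℝ) (x : ℕ → Fin l) : ℝ :=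
  ∑ a : Fin l,
    if A a (x 0) then Real.exp (φ (prepend a x)) * w (prepend a x) else 0

/-!
Write `uy` (`prependWord u y`) for a word `u` of length `k` followed by a sequence `y`. Then
`L^k w (y) = ∑_u e^{φ^k(uy)} w(uy)`, the sum running over the words `u` admissible before `y 0`.
For `y, z` in one cylinder `[x]_m`, bounded distortion `|φ^k(uy) - φ^k(ux)| ≤ D θ^m` gives
`|L^k w y - L^k w z| ≤ ∑_u e^D e^{φ^k(ux)} (|w(uy) - w(uz)| + 2 D θ^m |w(uz)|)`.
By the Gibbs property the inverse branch `y ↦ uy` carries `μ|[x]_m` to a measure absolutely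
continuous with respect to `μ|[ux]_{m+k}` (compare on cylinders, then use outer regularity), so the
essential suprema are bounded by `osc(w, m+k, ux)` and by the mean of `|w|` over `[ux]_{m+k}` plus
that oscillation. Integrating over `x`, the Gibbs property once more bounds `e^{φ^k(ux)} μ[x]_m`
by `c0² e^D μ[ux]_{m+k}`, and the cylinders `[ux]_{m+k}` are disjoint, so
`∫ osc(L^k w, m) ≤ c0² e^{2D} (∫ osc(w, m+k) + 2 D θ^m (‖w‖₁ + ∫ osc(w, m+k)))`;
multiplying by `θ^{-m}` and using `θ^{-m} ∫ osc(w, m+k) ≤ θ^k |w|_θ` gives the inequality.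
-/

section Words

variable {α : Type*} {k m n : ℕ}

def prependWord (u : Fin k → α) (y : ℕ → α) : ℕ → α :=
  fun n => if h : n < k then u ⟨n, h⟩ else y (n - k)

lemma prependWord_apply_of_lt (u : Fin k → α) (y : ℕ → α) (h : n < k) :
    prependWord u y n = u ⟨n, h⟩ := dif_pos h

lemma prependWord_apply_of_le (u : Fin k → α) (y : ℕ → α) (h : k ≤ n) :
    prependWord u y n = y (n - k) := dif_neg (by omega)

lemma prependWord_apply_add (u : Fin k → α) (y : ℕ → α) (n : ℕ) :
    prependWord u y (n + k) = y n := by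
  rw [prependWord_apply_of_le _ _ (by omega), Nat.add_sub_cancel]

lemma prependWord_of_isEmpty (u : Fin 0 → α) (y : ℕ → α) : prependWord u y = y :=
  funext (prependWord_apply_add u y)

lemma prepend_prependWord (a : α) (u : Fin k → α) (y : ℕ → α) :
    prepend a (prependWord u y) = prependWord (Fin.cons a u) y := by
  funext n
  rcases n with _ | n
  · rfl
  · show prependWord u y n = prependWord (Fin.cons a u) y (n + 1)
    by_cases h : n < k
    · rw [prependWord_apply_of_lt _ _ h, prependWord_apply_of_lt _ _ (by omega)]
      rfl
    · rw [prependWord_apply_of_le _ _ (by omega), prependWord_apply_of_le _ _ (by omega)]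
      congr 1
      omega

lemma shiftSeq_prepend (a : α) (x : ℕ → α) : shiftSeq (prepend a x) = x := rfl

lemma shiftSeq_iterate_apply (x : ℕ → α) (i n : ℕ) : shiftSeq^[i] x n = x (n + i) := by
  induction i generalizing x with
  | zero => rfl
  | succ i ih => rw [Function.iterate_succ_apply, ih]; rfl

lemma shiftSeq_iterate_prependWord (u : Fin k → α) (y : ℕ → α) :
    shiftSeq^[k] (prependWord u y) = y := by
  funext n
  rw [shiftSeq_iterate_apply, prependWord_apply_add]

lemma prependWord_shiftSeq_iterate {u : Fin k → α} {y : ℕ → α} (hy : ∀ i : Fin k, y i = u i) :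
    prependWord u (shiftSeq^[k] y) = y := by
  funext n
  by_cases h : n < k
  · rw [prependWord_apply_of_lt _ _ h, ← hy]
  · rw [prependWord_apply_of_le _ _ (by omega), shiftSeq_iterate_apply,
      Nat.sub_add_cancel (by omega)]

lemma mem_cyl_self (x : ℕ → α) (n : ℕ) : x ∈ cyl x n := fun _ _ => rfl

lemma cyl_eq_of_mem {x y : ℕ → α} (h : y ∈ cyl x n) : cyl y n = cyl x n :=
  Set.ext fun _ => forall₂_congr fun i hi => by rw [h i hi]

lemma cyl_anti {x : ℕ → α} (h : m ≤ n) : cyl x n ⊆ cyl x m :=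
  fun _ hz i hi => hz i (by omega)

lemma cyl_subset_of_not_disjoint {x y : ℕ → α} (h : m ≤ n) (hxy : ¬Disjoint (cyl x m) (cyl y n)) :
    cyl y n ⊆ cyl x m := by
  obtain ⟨z, hzx, hzy⟩ := Set.not_disjoint_iff.mp hxy
  rw [← cyl_eq_of_mem hzx, ← cyl_eq_of_mem hzy]
  exact cyl_anti h

lemma prependWord_mem_cyl_prependWord_iff {u u' : Fin k → α} {y y' : ℕ → α} :
    prependWord u y ∈ cyl (prependWord u' y') (n + k) ↔ u = u' ∧ y ∈ cyl y' n := by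
  constructor
  · intro h
    refine ⟨funext fun i => ?_, fun j hj => ?_⟩
    · simpa [prependWord_apply_of_lt] using h i (by omega)
    · simpa [prependWord_apply_add] using h (j + k) (by omega)
  · rintro ⟨rfl, h⟩ i hi
    by_cases hik : i < k
    · rw [prependWord_apply_of_lt _ _ hik, prependWord_apply_of_lt _ _ hik]
    · rw [prependWord_apply_of_le _ _ (by omega), prependWord_apply_of_le _ _ (by omega)]
      exact h _ (by omega)

lemma prependWord_mem_cyl (u : Fin k → α) {x y : ℕ → α} (h : y ∈ cyl x n) :
    prependWord u y ∈ cyl (prependWord u x) (n + k) :=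
  prependWord_mem_cyl_prependWord_iff.mpr ⟨rfl, h⟩

lemma mem_cyl_prependWord_restrict (y z : ℕ → α) (n : ℕ) :
    y ∈ cyl (prependWord (fun i : Fin n => y i) z) n :=
  fun i hi => by rw [prependWord_apply_of_lt _ _ hi]

lemma eq_of_prependWord_mem_cyl {u u' : Fin k → α} {z : ℕ → α}
    (h : prependWord u z ∈ cyl (prependWord u' z) k) : u = u' :=
  (prependWord_mem_cyl_prependWord_iff (n := 0)).mp (by rwa [zero_add]) |>.1

lemma pairwise_disjoint_cyl_prependWord (z : ℕ → α) :
    Pairwise (Function.onFun Disjoint fun v : Fin n → α => cyl (prependWord v z) n) := by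
  intro v v' hne
  by_contra hdisj
  exact hne (eq_of_prependWord_mem_cyl
    (cyl_subset_of_not_disjoint le_rfl hdisj (mem_cyl_self _ _))).symm

lemma pairwise_disjoint_cyl_prependWord_prependWord (z : ℕ → α) :
    Pairwise (Function.onFun Disjoint fun p : (Fin k → α) × (Fin m → α) =>
      cyl (prependWord p.1 (prependWord p.2 z)) (m + k)) := by
  rintro ⟨u, v⟩ ⟨u', v'⟩ hne
  by_contra hdisj
  obtain ⟨rfl, hv⟩ := prependWord_mem_cyl_prependWord_iff.mp
    (cyl_subset_of_not_disjoint le_rfl hdisj (mem_cyl_self _ _))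
  exact hne (Prod.ext rfl (eq_of_prependWord_mem_cyl hv).symm)

lemma prependWord_preimage_cyl_subset (u : Fin k → α) (y : ℕ → α) (n : ℕ) :
    prependWord u ⁻¹' cyl y n ⊆ cyl (shiftSeq^[k] y) (n - k) := fun z hz i hi => by
  rw [shiftSeq_iterate_apply, ← hz (i + k) (by omega), prependWord_apply_add]

lemma setOf_cyl_subset_eq_biUnion (U : Set (ℕ → α)) (z : ℕ → α) (n : ℕ) :
    {y | cyl y n ⊆ U} = ⋃ v ∈ {v : Fin n → α | cyl (prependWord v z) n ⊆ U},
      cyl (prependWord v z) n := by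
  ext y
  simp only [Set.mem_ofPred_eq, Set.mem_iUnion, exists_prop]
  constructor
  · intro hy
    have hmem := mem_cyl_prependWord_restrict y z n
    exact ⟨_, (cyl_eq_of_mem hmem).symm ▸ hy, hmem⟩
  · rintro ⟨v, hv, hy⟩
    rwa [cyl_eq_of_mem hy]

end Words

section Admissible

variable {α : Type*} {k : ℕ} (A : α → α → Bool)

def admissibleSet : Set (ℕ → α) := {x | ∀ n, A (x n) (x (n + 1)) = true}

def AdmissiblePrefix (u : Fin k → α) (y : ℕ → α) : Prop :=
  ∀ i < k, A (prependWord u y i) (prependWord u y (i + 1)) = true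

instance (u : Fin k → α) (y : ℕ → α) : Decidable (AdmissiblePrefix A u y) := by
  unfold AdmissiblePrefix; infer_instance

variable {A}

lemma admissiblePrefix_congr (u : Fin k → α) {y z : ℕ → α} (h : y 0 = z 0) :
    AdmissiblePrefix A u y ↔ AdmissiblePrefix A u z := by
  have key : ∀ i ≤ k, prependWord u y i = prependWord u z i := by
    intro i hi
    rcases hi.lt_or_eq with hi | rfl
    · rw [prependWord_apply_of_lt _ _ hi, prependWord_apply_of_lt _ _ hi]
    · simpa [prependWord_apply_of_le] using h
  refine forall₂_congr fun i hi => ?_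
  rw [key i hi.le, key (i + 1) hi]

lemma admissiblePrefix_cons_iff (a : α) (u : Fin k → α) (y : ℕ → α) :
    AdmissiblePrefix A (Fin.cons a u) y ↔
      A a (prependWord u y 0) = true ∧ AdmissiblePrefix A u y := by
  simp only [AdmissiblePrefix, ← prepend_prependWord]
  constructor
  · intro h
    exact ⟨h 0 (by omega), fun i hi => h (i + 1) (by omega)⟩
  · rintro ⟨h0, h⟩ (_ | i) hi
    exacts [h0, h i (by omega)]

lemma prependWord_mem_admissibleSet {u : Fin k → α} {y : ℕ → α} (hy : y ∈ admissibleSet A)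
    (hu : AdmissiblePrefix A u y) : prependWord u y ∈ admissibleSet A := by
  intro n
  by_cases hn : n < k
  · exact hu n hn
  · rw [prependWord_apply_of_le _ _ (by omega), prependWord_apply_of_le _ _ (by omega),
      show n + 1 - k = n - k + 1 by omega]
    exact hy _

end Admissible

section Birkhoff

variable {α : Type*} (φ : (ℕ → α) → ℝ)

lemma birk_succ' (k : ℕ) (x : ℕ → α) : birk φ (k + 1) x = φ x + birk φ k (shiftSeq x) := by
  simp only [birk, Finset.sum_range_succ', Function.iterate_succ_apply, Function.iterate_zero_apply]
  ring

lemma birk_add (a b : ℕ) (x : ℕ → α) :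
    birk φ (a + b) x = birk φ a x + birk φ b (shiftSeq^[a] x) := by
  simp only [birk, Finset.sum_range_add, ← Function.iterate_add_apply, add_comm _ a]

end Birkhoff

section TransferIterate

variable {l : ℕ} (A : Fin l → Fin l → Bool) (φ : (ℕ → Fin l) → ℝ)

lemma transfer_iterate_apply (k : ℕ) (w : (ℕ → Fin l) → ℝ) (x : ℕ → Fin l) :
    (transfer A φ)^[k] w x = ∑ u : Fin k → Fin l with AdmissiblePrefix A u x,
      Real.exp (birk φ k (prependWord u x)) * w (prependWord u x) := by
  induction k generalizing w with
  | zero => simp [AdmissiblePrefix, birk, prependWord_of_isEmpty]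
  | succ k ih =>
    have hterm : ∀ u : Fin k → Fin l, ∀ a : Fin l,
        (if AdmissiblePrefix A u x then Real.exp (birk φ k (prependWord u x)) *
          (if A a (prependWord u x 0) then Real.exp (φ (prepend a (prependWord u x))) *
            w (prepend a (prependWord u x)) else 0) else 0) =
        if AdmissiblePrefix A (Fin.cons a u) x then
          Real.exp (birk φ (k + 1) (prependWord (Fin.cons a u) x)) *
            w (prependWord (Fin.cons a u) x) else 0 := by
      intro u a
      simp only [admissiblePrefix_cons_iff, ← prepend_prependWord, birk_succ', shiftSeq_prepend,
        Real.exp_add]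
      by_cases hu : AdmissiblePrefix A u x
      · by_cases ha : A a (prependWord u x 0)
        · simp only [hu, ha, and_self, if_true]
          ring
        · simp [ha]
      · simp [hu]
    rw [Function.iterate_succ_apply, ih, Finset.sum_filter, Finset.sum_filter,
      ← (Fin.consEquiv fun _ => Fin l).sum_comp, Fintype.sum_prod_type, Finset.sum_comm]
    refine Finset.sum_congr rfl fun u _ => ?_
    refine Eq.trans ?_ (Finset.sum_congr rfl fun a _ => hterm u a)
    split_ifs <;> simp [transfer, Finset.mul_sum]

end TransferIterate

lemma Real.abs_exp_sub_exp_le (a b : ℝ) :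
    |Real.exp a - Real.exp b| ≤ Real.exp (max a b) * |a - b| := by
  wlog h : b ≤ a generalizing a b
  · simpa [abs_sub_comm, max_comm] using this b a (by linarith)
  have hb : Real.exp a * (b - a + 1) ≤ Real.exp b := by
    rw [show b = a + (b - a) by ring, Real.exp_add]
    exact mul_le_mul_of_nonneg_left (by simpa [add_comm] using Real.add_one_le_exp (b - a))
      (Real.exp_pos a).le
  rw [abs_of_nonneg (by simpa using Real.exp_le_exp.mpr h), max_eq_left h,
    abs_of_nonneg (by linarith)]
  nlinarith

lemma Real.abs_exp_mul_sub_exp_mul_le {a b s v v' δ : ℝ} (ha : |a - s| ≤ δ) (hb : |b - s| ≤ δ) :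
    |Real.exp a * v - Real.exp b * v'| ≤ Real.exp δ * Real.exp s * (|v - v'| + 2 * δ * |v'|) := by
  have hexp : ∀ c, c ≤ s + δ → Real.exp c ≤ Real.exp δ * Real.exp s := fun c hc => by
    rw [← Real.exp_add]; exact Real.exp_le_exp.mpr (by linarith)
  have hea := hexp a (by linarith [le_abs_self (a - s)])
  have hmax := hexp (max a b) (max_le (by linarith [le_abs_self (a - s)])
    (by linarith [le_abs_self (b - s)]))
  have hab : |a - b| ≤ 2 * δ := by
    calc |a - b| = |(a - s) - (b - s)| := by ring_nf
      _ ≤ |a - s| + |b - s| := abs_sub _ _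
      _ ≤ 2 * δ := by linarith
  calc |Real.exp a * v - Real.exp b * v'|
      = |Real.exp a * (v - v') + (Real.exp a - Real.exp b) * v'| := by ring_nf
    _ ≤ Real.exp a * |v - v'| + |Real.exp a - Real.exp b| * |v'| := by
      refine (abs_add_le _ _).trans ?_
      rw [abs_mul, abs_mul, abs_of_pos (Real.exp_pos a)]
    _ ≤ Real.exp δ * Real.exp s * |v - v'| + Real.exp δ * Real.exp s * (2 * δ) * |v'| := by
      gcongr
      exact (Real.abs_exp_sub_exp_le a b).trans
        (mul_le_mul hmax hab (abs_nonneg _) (by positivity))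
    _ = Real.exp δ * Real.exp s * (|v - v'| + 2 * δ * |v'|) := by ring

section Distortion

variable {α : Type*} {θ K D : ℝ} {φ : (ℕ → α) → ℝ}

def CylHolder (θ K : ℝ) (φ : (ℕ → α) → ℝ) : Prop :=
  ∀ x y : ℕ → α, ∀ n : ℕ, (∀ i < n, x i = y i) → |φ x - φ y| ≤ K * θ ^ n

def HasBoundedDistortion (φ : (ℕ → α) → ℝ) (θ D : ℝ) : Prop :=
  ∀ k m : ℕ, ∀ p q : ℕ → α, (∀ i < m + k, p i = q i) → |birk φ k p - birk φ k q| ≤ D * θ ^ m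

lemma sum_range_pow_sub_le {θ : ℝ} (hθ : 0 ≤ θ) (hθ1 : θ < 1) (k m : ℕ) :
    ∑ i ∈ Finset.range k, θ ^ (m + k - i) ≤ θ / (1 - θ) * θ ^ m := by
  calc ∑ i ∈ Finset.range k, θ ^ (m + k - i)
      = ∑ i ∈ Finset.range k, θ ^ (m + 1 + i) := by
        rw [← Finset.sum_range_reflect]
        exact Finset.sum_congr rfl fun i hi => by
          rw [Finset.mem_range] at hi; congr 1; omega
    _ = ∑ i ∈ Finset.Ico (m + 1) (m + 1 + k), θ ^ i := by
        rw [Finset.sum_Ico_eq_sum_range, Nat.add_sub_cancel_left]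
    _ ≤ θ ^ (m + 1) / (1 - θ) := geom_sum_Ico_le_of_lt_one hθ hθ1
    _ = θ / (1 - θ) * θ ^ m := by ring

lemma CylHolder.nonneg (hφ : CylHolder θ K φ) (x : ℕ → α) : 0 ≤ K := by
  simpa using hφ x x 0 (fun _ _ => rfl)

lemma CylHolder.hasBoundedDistortion (hφ : CylHolder θ K φ) (hθ : 0 < θ) (hθ1 : θ < 1) :
    HasBoundedDistortion φ θ (K * (θ / (1 - θ))) := by
  intro k m p q hpq
  calc |birk φ k p - birk φ k q|
      ≤ ∑ i ∈ Finset.range k, |φ (shiftSeq^[i] p) - φ (shiftSeq^[i] q)| := by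
        rw [birk, birk, ← Finset.sum_sub_distrib]
        exact Finset.abs_sum_le_sum_abs _ _
    _ ≤ ∑ i ∈ Finset.range k, K * θ ^ (m + k - i) := by
        refine Finset.sum_le_sum fun i hi => hφ _ _ _ fun j hj => ?_
        rw [Finset.mem_range] at hi
        rw [shiftSeq_iterate_apply, shiftSeq_iterate_apply]
        exact hpq _ (by omega)
    _ ≤ K * (θ / (1 - θ) * θ ^ m) := by
        rw [← Finset.mul_sum]
        exact mul_le_mul_of_nonneg_left (sum_range_pow_sub_le hθ.le hθ1 k m) (hφ.nonneg p)
    _ = K * (θ / (1 - θ)) * θ ^ m := by ring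

lemma HasBoundedDistortion.nonneg (hφ : HasBoundedDistortion φ θ D) (x : ℕ → α) : 0 ≤ D := by
  simpa using hφ 0 0 x x (fun _ _ => rfl)

lemma HasBoundedDistortion.abs_birk_sub_le (hφ : HasBoundedDistortion φ θ D) (hθ : 0 ≤ θ)
    (hθ1 : θ ≤ 1) {k m : ℕ} {p q : ℕ → α} (hpq : p ∈ cyl q (m + k)) :
    |birk φ k p - birk φ k q| ≤ D :=
  (hφ k m p q hpq).trans (mul_le_of_le_one_right (hφ.nonneg p) (pow_le_one₀ hθ hθ1))

end Distortion

section Cylinders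

variable {l : ℕ}

lemma measurableSet_cyl (x : ℕ → Fin l) (n : ℕ) : MeasurableSet (cyl x n) := by
  simp only [cyl, Set.ofPred_forall]
  exact .iInter fun i => .iInter fun _ =>
    measurableSet_eq_fun (measurable_pi_apply i) measurable_const

lemma measurable_prependWord {k : ℕ} (u : Fin k → Fin l) : Measurable (prependWord u) := by
  refine measurable_pi_lambda _ fun n => ?_
  by_cases h : n < k
  · simp only [prependWord, dif_pos h, measurable_const]
  · simp only [prependWord, dif_neg h]
    exact measurable_pi_apply _

lemma measurableSet_admissibleSet (A : Fin l → Fin l → Bool) : MeasurableSet (admissibleSet A) := by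
  simp only [admissibleSet, Set.ofPred_forall]
  exact .iInter fun n => measurableSet_eq_fun (by fun_prop) measurable_const

lemma exists_cyl_subset_of_isOpen {U : Set (ℕ → Fin l)} (hU : IsOpen U) {y : ℕ → Fin l}
    (hy : y ∈ U) : ∃ N, cyl y N ⊆ U := by
  obtain ⟨I, u, hu, hsub⟩ := isOpen_pi_iff.mp hU y hy
  refine ⟨I.sup id + 1, fun z hz => hsub fun i hi => ?_⟩
  rw [hz i (Nat.lt_succ_of_le (Finset.le_sup (f := id) hi))]
  exact (hu i hi).2

lemma measure_setOf_cyl_subset_le {ν ρ : Measure (ℕ → Fin l)} {N : ℕ}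
    (h : ∀ y, ν (cyl y N) ≤ ρ (cyl y N)) (U : Set (ℕ → Fin l)) :
    ν {y | cyl y N ⊆ U} ≤ ρ {y | cyl y N ⊆ U} := by
  rcases isEmpty_or_nonempty (ℕ → Fin l) with _ | ⟨⟨z⟩⟩
  · simp [Set.eq_empty_of_isEmpty]
  have hdisj := (pairwise_disjoint_cyl_prependWord (n := N) z).set_pairwise
    {v | cyl (prependWord v z) N ⊆ U}
  rw [setOf_cyl_subset_eq_biUnion U z, measure_biUnion (Set.to_countable _) hdisj
    fun v _ => measurableSet_cyl _ _, measure_biUnion (Set.to_countable _) hdisj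
    fun v _ => measurableSet_cyl _ _]
  exact ENNReal.tsum_le_tsum fun v => h _

lemma measure_le_of_isOpen_of_forall_cyl_le {ν ρ : Measure (ℕ → Fin l)} (N₀ : ℕ)
    (h : ∀ y N, N₀ ≤ N → ν (cyl y N) ≤ ρ (cyl y N)) {U : Set (ℕ → Fin l)} (hU : IsOpen U) :
    ν U ≤ ρ U := by
  have hU_eq : U = ⋃ N, {y | cyl y (N + N₀) ⊆ U} := by
    refine subset_antisymm (fun y hy => ?_) (Set.iUnion_subset fun N y hy => hy (mem_cyl_self y _))
    obtain ⟨N, hN⟩ := exists_cyl_subset_of_isOpen hU hy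
    exact Set.mem_iUnion.mpr ⟨N, (cyl_anti (by omega)).trans hN⟩
  calc ν U = ⨆ N, ν {y | cyl y (N + N₀) ⊆ U} := by
        conv_lhs => rw [hU_eq]
        exact Monotone.measure_iUnion fun N N' hNN' y hy => (cyl_anti (by omega)).trans hy
    _ ≤ ρ U := iSup_le fun N => (measure_setOf_cyl_subset_le (fun y => h y _ (by omega)) U).trans
        (measure_mono fun y hy => hy (mem_cyl_self y _))

lemma Measure.le_of_forall_cyl_le {ν ρ : Measure (ℕ → Fin l)} [IsFiniteMeasure ρ] (N₀ : ℕ)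
    (h : ∀ y N, N₀ ≤ N → ν (cyl y N) ≤ ρ (cyl y N)) : ν ≤ ρ := by
  refine Measure.le_iff.mpr fun S _ => ENNReal.le_of_forall_pos_le_add fun ε hε hρS => ?_
  obtain ⟨U, hSU, hU, hUε⟩ := Set.exists_isOpen_lt_of_lt S (ρ S + ε)
    (ENNReal.lt_add_right hρS.ne (by simpa using hε.ne'))
  exact (measure_mono hSU).trans ((measure_le_of_isOpen_of_forall_cyl_le N₀ h hU).trans hUε.le)

end Cylinders

lemma ae_le_laverage_add_essSup {α : Type*} [MeasurableSpace α] (ν : Measure α)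
    [IsFiniteMeasure ν] (w : α → ℝ) :
    ∀ᵐ z ∂ν, ENNReal.ofReal |w z| ≤ ⨍⁻ q, ENNReal.ofReal |w q| ∂ν +
      essSup (fun p : α × α => ENNReal.ofReal |w p.1 - w p.2|) (ν.prod ν) := by
  rcases eq_or_ne ν 0 with rfl | hν
  · simp
  set S := essSup (fun p : α × α => ENNReal.ofReal |w p.1 - w p.2|) (ν.prod ν)
  filter_upwards [Measure.ae_ae_of_ae_prod (ENNReal.ae_le_essSup (μ := ν.prod ν)
    fun p : α × α => ENNReal.ofReal |w p.1 - w p.2|)] with z hz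
  have hzq : ∀ᵐ q ∂ν, ENNReal.ofReal |w z| ≤ ENNReal.ofReal |w q| + S := by
    filter_upwards [hz] with q hq
    calc ENNReal.ofReal |w z| ≤ ENNReal.ofReal (|w q| + |w z - w q|) :=
          ENNReal.ofReal_le_ofReal (by linarith [abs_sub_abs_le_abs_sub (w z) (w q)])
      _ ≤ ENNReal.ofReal |w q| + S := ENNReal.ofReal_add_le.trans (by gcongr)
  refine (ENNReal.mul_le_mul_iff_right (Measure.measure_univ_ne_zero.mpr hν)
    (measure_ne_top ν _)).mp ?_
  calc ν Set.univ * ENNReal.ofReal |w z| = ∫⁻ _, ENNReal.ofReal |w z| ∂ν := by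
        rw [lintegral_const, mul_comm]
    _ ≤ ∫⁻ q, (ENNReal.ofReal |w q| + S) ∂ν := lintegral_mono_ae hzq
    _ = ν Set.univ * (⨍⁻ q, ENNReal.ofReal |w q| ∂ν + S) := by
        rw [lintegral_add_right _ measurable_const, lintegral_const, ← measure_mul_laverage,
          mul_add, mul_comm S]

section Gibbs

variable {l k m n : ℕ} {A : Fin l → Fin l → Bool} {φ : (ℕ → Fin l) → ℝ} {c0 θ D : ℝ}
  {μ : Measure (ℕ → Fin l)}

structure IsGibbsMeasure (A : Fin l → Fin l → Bool) (φ : (ℕ → Fin l) → ℝ) (c0 : ℝ)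
    (μ : Measure (ℕ → Fin l)) : Prop where
  const_pos : 0 < c0
  ae_mem_admissibleSet : ∀ᵐ x ∂μ, x ∈ admissibleSet A
  le_measure_cyl : ∀ x ∈ admissibleSet A, ∀ n, 1 ≤ n →
    ENNReal.ofReal (c0⁻¹ * Real.exp (birk φ n x)) ≤ μ (cyl x n)
  measure_cyl_le : ∀ x ∈ admissibleSet A, ∀ n, 1 ≤ n →
    μ (cyl x n) ≤ ENNReal.ofReal (c0 * Real.exp (birk φ n x))

namespace IsGibbsMeasure

lemma exists_mem_admissibleSet (hμ : IsGibbsMeasure A φ c0 μ) {S : Set (ℕ → Fin l)}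
    (hS : μ S ≠ 0) : ∃ p ∈ S, p ∈ admissibleSet A := by
  by_contra! h
  exact hS (measure_mono_null h (ae_iff.mp hμ.ae_mem_admissibleSet))

lemma measure_cyl_le_prependWord_of_mem (hμ : IsGibbsMeasure A φ c0 μ) {p : ℕ → Fin l}
    (hp : p ∈ admissibleSet A) {u : Fin k → Fin l} (hu : AdmissiblePrefix A u p) (hm : 1 ≤ m) :
    μ (cyl p m) ≤ ENNReal.ofReal (c0 ^ 2 * Real.exp (-birk φ k (prependWord u p))) *
      μ (cyl (prependWord u p) (m + k)) := by
  have hc0 := hμ.const_pos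
  have hsplit : birk φ (m + k) (prependWord u p) = birk φ k (prependWord u p) + birk φ m p := by
    rw [add_comm m k, birk_add, shiftSeq_iterate_prependWord]
  calc μ (cyl p m) ≤ ENNReal.ofReal (c0 * Real.exp (birk φ m p)) := hμ.measure_cyl_le p hp m hm
    _ = ENNReal.ofReal (c0 ^ 2 * Real.exp (-birk φ k (prependWord u p))) *
        ENNReal.ofReal (c0⁻¹ * Real.exp (birk φ (m + k) (prependWord u p))) := by
      rw [← ENNReal.ofReal_mul (by positivity), hsplit, Real.exp_add, Real.exp_neg]
      congr 1
      field_simp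
    _ ≤ _ := by
      gcongr
      exact hμ.le_measure_cyl _ (prependWord_mem_admissibleSet hp hu) _ (by omega)

lemma measure_cyl_le_prependWord (hμ : IsGibbsMeasure A φ c0 μ)
    (hφ : HasBoundedDistortion φ θ D) (hθ : 0 ≤ θ) (hθ1 : θ ≤ 1) {x : ℕ → Fin l}
    {u : Fin k → Fin l} (hu : AdmissiblePrefix A u x) (hm : 1 ≤ m) :
    μ (cyl x m) ≤ ENNReal.ofReal (c0 ^ 2 * Real.exp (D - birk φ k (prependWord u x))) *
      μ (cyl (prependWord u x) (m + k)) := by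
  by_cases h0 : μ (cyl x m) = 0
  · simp [h0]
  obtain ⟨p, hpx, hp⟩ := hμ.exists_mem_admissibleSet h0
  have hupx := prependWord_mem_cyl u hpx
  have hdist := abs_le.mp (hφ.abs_birk_sub_le hθ hθ1 hupx)
  calc μ (cyl x m) = μ (cyl p m) := by rw [cyl_eq_of_mem hpx]
    _ ≤ ENNReal.ofReal (c0 ^ 2 * Real.exp (-birk φ k (prependWord u p))) *
        μ (cyl (prependWord u p) (m + k)) :=
      hμ.measure_cyl_le_prependWord_of_mem hp
        ((admissiblePrefix_congr u (hpx 0 (by omega))).mpr hu) hm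
    _ ≤ _ := by
      rw [cyl_eq_of_mem hupx]
      gcongr ENNReal.ofReal (_ * Real.exp ?_) * _
      linarith

lemma measure_prependWord_preimage_cyl_le (hμ : IsGibbsMeasure A φ c0 μ)
    (hφ : HasBoundedDistortion φ θ D) (hθ : 0 ≤ θ) (hθ1 : θ ≤ 1) {x : ℕ → Fin l}
    {u : Fin k → Fin l} (hu : AdmissiblePrefix A u x) (hm : 1 ≤ m) (y : ℕ → Fin l) {N : ℕ}
    (hN : m + k ≤ N) :
    μ (prependWord u ⁻¹' cyl y N ∩ cyl x m) ≤
      ENNReal.ofReal (c0 ^ 2 * Real.exp (2 * D - birk φ k (prependWord u x))) *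
        μ (cyl y N ∩ cyl (prependWord u x) (m + k)) := by
  by_cases hdisj : Disjoint (cyl (prependWord u x) (m + k)) (cyl y N)
  · have hempty : prependWord u ⁻¹' cyl y N ∩ cyl x m = ∅ := Set.eq_empty_of_forall_notMem
      fun z hz => Set.disjoint_left.mp hdisj (prependWord_mem_cyl u hz.2) hz.1
    simp [hempty]
  have hsub := cyl_subset_of_not_disjoint hN hdisj
  have hyx : y ∈ cyl (prependWord u x) (m + k) := hsub (mem_cyl_self y N)
  have hy : prependWord u (shiftSeq^[k] y) = y :=
    prependWord_shiftSeq_iterate fun i => by rw [hyx i (by omega), prependWord_apply_of_lt]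
  have hu' : AdmissiblePrefix A u (shiftSeq^[k] y) := by
    refine (admissiblePrefix_congr u ?_).mpr hu
    rw [shiftSeq_iterate_apply, hyx _ (by omega)]
    simpa using prependWord_apply_add u x 0
  have hdist := abs_le.mp (hφ.abs_birk_sub_le hθ hθ1 hyx)
  calc μ (prependWord u ⁻¹' cyl y N ∩ cyl x m) ≤ μ (cyl (shiftSeq^[k] y) (N - k)) :=
        measure_mono (Set.inter_subset_left.trans (prependWord_preimage_cyl_subset u y N))
    _ ≤ ENNReal.ofReal (c0 ^ 2 * Real.exp (D - birk φ k y)) * μ (cyl y N) := by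
        have := hμ.measure_cyl_le_prependWord hφ hθ hθ1 hu' (m := N - k) (by omega)
        rwa [hy, Nat.sub_add_cancel (by omega)] at this
    _ ≤ _ := by
        rw [Set.inter_eq_left.mpr hsub]
        gcongr ENNReal.ofReal (_ * Real.exp ?_) * _
        linarith

lemma quasiMeasurePreserving_prependWord [IsFiniteMeasure μ] (hμ : IsGibbsMeasure A φ c0 μ)
    (hφ : HasBoundedDistortion φ θ D) (hθ : 0 ≤ θ) (hθ1 : θ ≤ 1) {x : ℕ → Fin l}
    {u : Fin k → Fin l} (hu : AdmissiblePrefix A u x) (hm : 1 ≤ m) :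
    Measure.QuasiMeasurePreserving (prependWord u) (μ.restrict (cyl x m))
      (μ.restrict (cyl (prependWord u x) (m + k))) := by
  set K := ENNReal.ofReal (c0 ^ 2 * Real.exp (2 * D - birk φ k (prependWord u x)))
  have := (μ.restrict (cyl (prependWord u x) (m + k))).smul_finite (c := K) ENNReal.ofReal_ne_top
  refine ⟨measurable_prependWord u, Measure.absolutelyContinuous_of_le_smul (c := K)
    (Measure.le_of_forall_cyl_le (m + k) fun y N hN => ?_)⟩
  rw [Measure.map_apply (measurable_prependWord u) (measurableSet_cyl y N),
    Measure.restrict_apply (measurable_prependWord u (measurableSet_cyl y N)),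
    Measure.smul_apply, Measure.restrict_apply (measurableSet_cyl y N), smul_eq_mul]
  exact hμ.measure_prependWord_preimage_cyl_le hφ hθ hθ1 hu hm y hN

end IsGibbsMeasure

lemma transfer_iterate_apply_of_mem_cyl (w : (ℕ → Fin l) → ℝ) {x y : ℕ → Fin l}
    (hy : y ∈ cyl x m) (hm : 1 ≤ m) :
    (transfer A φ)^[k] w y = ∑ u : Fin k → Fin l with AdmissiblePrefix A u x,
      Real.exp (birk φ k (prependWord u y)) * w (prependWord u y) := by
  rw [transfer_iterate_apply]
  exact Finset.sum_congr (Finset.filter_congr fun u _ => admissiblePrefix_congr u (hy 0 hm))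
    fun _ _ => rfl

lemma abs_transfer_iterate_sub_le (hφ : HasBoundedDistortion φ θ D) (hθ : 0 ≤ θ) (hθ1 : θ ≤ 1)
    (w : (ℕ → Fin l) → ℝ) {x y z : ℕ → Fin l} (hy : y ∈ cyl x m) (hz : z ∈ cyl x m)
    (hm : 1 ≤ m) :
    |(transfer A φ)^[k] w y - (transfer A φ)^[k] w z| ≤
      ∑ u : Fin k → Fin l with AdmissiblePrefix A u x,
        Real.exp D * Real.exp (birk φ k (prependWord u x)) *
          (|w (prependWord u y) - w (prependWord u z)| +
            2 * D * θ ^ m * |w (prependWord u z)|) := by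
  rw [transfer_iterate_apply_of_mem_cyl w hy hm, transfer_iterate_apply_of_mem_cyl w hz hm,
    ← Finset.sum_sub_distrib]
  refine (Finset.abs_sum_le_sum_abs _ _).trans (Finset.sum_le_sum fun u _ => ?_)
  have hD := hφ.nonneg x
  refine (Real.abs_exp_mul_sub_exp_mul_le (hφ k m _ _ (prependWord_mem_cyl u hy))
    (hφ k m _ _ (prependWord_mem_cyl u hz))).trans ?_
  have hθm := pow_le_one₀ hθ hθ1 (n := m)
  rw [mul_assoc 2 D]
  gcongr
  exact mul_le_of_le_one_right hD hθm

lemma ofReal_abs_transfer_iterate_sub_le (hφ : HasBoundedDistortion φ θ D) (hθ : 0 ≤ θ)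
    (hθ1 : θ ≤ 1) (w : (ℕ → Fin l) → ℝ) {x y z : ℕ → Fin l} (hy : y ∈ cyl x m)
    (hz : z ∈ cyl x m) (hm : 1 ≤ m) :
    ENNReal.ofReal |(transfer A φ)^[k] w y - (transfer A φ)^[k] w z| ≤
      ∑ u : Fin k → Fin l with AdmissiblePrefix A u x,
        ENNReal.ofReal (Real.exp D * Real.exp (birk φ k (prependWord u x))) *
          (ENNReal.ofReal |w (prependWord u y) - w (prependWord u z)| +
            ENNReal.ofReal (2 * D * θ ^ m) * ENNReal.ofReal |w (prependWord u z)|) := by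
  have hD := hφ.nonneg x
  refine (ENNReal.ofReal_le_ofReal (abs_transfer_iterate_sub_le hφ hθ hθ1 w hy hz hm)).trans
    (le_of_eq ?_)
  rw [ENNReal.ofReal_sum_of_nonneg fun _ _ => by positivity]
  refine Finset.sum_congr rfl fun u _ => ?_
  rw [ENNReal.ofReal_mul (by positivity), ENNReal.ofReal_add (by positivity) (by positivity),
    ENNReal.ofReal_mul (by positivity), ENNReal.ofReal_mul (by positivity)]

lemma IsGibbsMeasure.oscE_transfer_iterate_le [IsFiniteMeasure μ] (hμ : IsGibbsMeasure A φ c0 μ)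
    (hφ : HasBoundedDistortion φ θ D) (hθ : 0 ≤ θ) (hθ1 : θ ≤ 1) (w : (ℕ → Fin l) → ℝ)
    (x : ℕ → Fin l) (hm : 1 ≤ m) :
    oscE μ ((transfer A φ)^[k] w) m x ≤
      ∑ u : Fin k → Fin l with AdmissiblePrefix A u x,
        ENNReal.ofReal (Real.exp D * Real.exp (birk φ k (prependWord u x))) *
          (oscE μ w (m + k) (prependWord u x) + ENNReal.ofReal (2 * D * θ ^ m) *
            (⨍⁻ z in cyl (prependWord u x) (m + k), ENNReal.ofReal |w z| ∂μ +
              oscE μ w (m + k) (prependWord u x))) := by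
  set ν := μ.restrict (cyl x m)
  have hQ (u : {u : Fin k → Fin l // AdmissiblePrefix A u x}) :=
    hμ.quasiMeasurePreserving_prependWord hφ hθ hθ1 u.2 hm
  have hosc : ∀ᵐ p ∂ν.prod ν, ∀ u : {u : Fin k → Fin l // AdmissiblePrefix A u x},
      ENNReal.ofReal |w (prependWord u.1 p.1) - w (prependWord u.1 p.2)| ≤
        oscE μ w (m + k) (prependWord u.1 x) :=
    ae_all_iff.mpr fun u =>
      (QuasiMeasurePreserving.prodMap (hQ u) (hQ u)).ae (ENNReal.ae_le_essSup _)
  have hsup : ∀ᵐ p ∂ν.prod ν, ∀ u : {u : Fin k → Fin l // AdmissiblePrefix A u x},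
      ENNReal.ofReal |w (prependWord u.1 p.2)| ≤
        ⨍⁻ z in cyl (prependWord u.1 x) (m + k), ENNReal.ofReal |w z| ∂μ +
          oscE μ w (m + k) (prependWord u.1 x) :=
    ae_all_iff.mpr fun u => ((hQ u).comp Measure.quasiMeasurePreserving_snd).ae
      (ae_le_laverage_add_essSup _ w)
  have hmem : ∀ᵐ p ∂ν.prod ν, p.1 ∈ cyl x m ∧ p.2 ∈ cyl x m :=
    (Measure.quasiMeasurePreserving_fst.ae (ae_restrict_mem (measurableSet_cyl x m))).and
      (Measure.quasiMeasurePreserving_snd.ae (ae_restrict_mem (measurableSet_cyl x m)))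
  refine essSup_le_of_ae_le _ ?_
  filter_upwards [hmem, hosc, hsup] with p ⟨hp1, hp2⟩ hosc hsup
  refine (ofReal_abs_transfer_iterate_sub_le hφ hθ hθ1 w hp1 hp2 hm).trans
    (Finset.sum_le_sum fun u hu => ?_)
  have hu := (Finset.mem_filter.mp hu).2
  gcongr
  exacts [hosc ⟨u, hu⟩, hsup ⟨u, hu⟩]

lemma oscE_eq_of_mem_cyl (μ : Measure (ℕ → Fin l)) (w : (ℕ → Fin l) → ℝ) {x y : ℕ → Fin l}
    (h : y ∈ cyl x n) : oscE μ w n y = oscE μ w n x := by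
  rw [oscE, oscE, cyl_eq_of_mem h]

lemma setLIntegral_oscE_cyl (μ : Measure (ℕ → Fin l)) (w : (ℕ → Fin l) → ℝ) (x : ℕ → Fin l)
    (n : ℕ) : ∫⁻ y in cyl x n, oscE μ w n y ∂μ = oscE μ w n x * μ (cyl x n) := by
  rw [setLIntegral_congr_fun (measurableSet_cyl x n) fun y hy => oscE_eq_of_mem_cyl μ w hy,
    setLIntegral_const]

lemma lintegral_eq_sum_cyl {f : (ℕ → Fin l) → ℝ≥0∞} (hf : ∀ x y, y ∈ cyl x n → f y = f x)
    (z : ℕ → Fin l) :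
    ∫⁻ x, f x ∂μ = ∑ v : Fin n → Fin l, f (prependWord v z) * μ (cyl (prependWord v z) n) := by
  have hcover : ⋃ v : Fin n → Fin l, cyl (prependWord v z) n = Set.univ :=
    Set.eq_univ_of_forall fun y => Set.mem_iUnion.mpr ⟨_, mem_cyl_prependWord_restrict y z n⟩
  rw [← setLIntegral_univ, ← hcover, lintegral_iUnion (fun _ => measurableSet_cyl _ _)
    (pairwise_disjoint_cyl_prependWord z), tsum_fintype]
  refine Finset.sum_congr rfl fun v _ => ?_
  rw [setLIntegral_congr_fun (measurableSet_cyl _ _) fun y hy => hf _ y hy, setLIntegral_const]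

lemma sum_setLIntegral_cyl_le (f : (ℕ → Fin l) → ℝ≥0∞) (z : ℕ → Fin l) :
    ∑ v : Fin m → Fin l, ∑ u : Fin k → Fin l,
      ∫⁻ y in cyl (prependWord u (prependWord v z)) (m + k), f y ∂μ ≤ ∫⁻ y, f y ∂μ := by
  calc _ = ∫⁻ y in ⋃ p : (Fin k → Fin l) × (Fin m → Fin l),
        cyl (prependWord p.1 (prependWord p.2 z)) (m + k), f y ∂μ := by
        rw [lintegral_iUnion (fun _ => measurableSet_cyl _ _)
          (pairwise_disjoint_cyl_prependWord_prependWord z), tsum_fintype,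
          Fintype.sum_prod_type, Finset.sum_comm]
    _ ≤ _ := setLIntegral_le_lintegral _ _

lemma IsGibbsMeasure.mul_measure_cyl_le_setLIntegral [IsFiniteMeasure μ] (hμ : IsGibbsMeasure A φ c0 μ)
    (hφ : HasBoundedDistortion φ θ D) (hθ : 0 ≤ θ) (hθ1 : θ ≤ 1) (w : (ℕ → Fin l) → ℝ)
    {x : ℕ → Fin l} {u : Fin k → Fin l} (hu : AdmissiblePrefix A u x) (hm : 1 ≤ m)
    (c : ℝ≥0∞) :
    ENNReal.ofReal (Real.exp D * Real.exp (birk φ k (prependWord u x))) *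
        (oscE μ w (m + k) (prependWord u x) + c *
          (⨍⁻ z in cyl (prependWord u x) (m + k), ENNReal.ofReal |w z| ∂μ +
            oscE μ w (m + k) (prependWord u x))) * μ (cyl x m) ≤
      ENNReal.ofReal (c0 ^ 2 * Real.exp (2 * D)) *
        (∫⁻ y in cyl (prependWord u x) (m + k), oscE μ w (m + k) y ∂μ + c *
          (∫⁻ y in cyl (prependWord u x) (m + k), ENNReal.ofReal |w y| ∂μ +
            ∫⁻ y in cyl (prependWord u x) (m + k), oscE μ w (m + k) y ∂μ)) := by
  set B := cyl (prependWord u x) (m + k)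
  have hc0 := hμ.const_pos
  have hK : ENNReal.ofReal (Real.exp D * Real.exp (birk φ k (prependWord u x))) *
      ENNReal.ofReal (c0 ^ 2 * Real.exp (D - birk φ k (prependWord u x))) =
      ENNReal.ofReal (c0 ^ 2 * Real.exp (2 * D)) := by
    rw [← ENNReal.ofReal_mul (by positivity), ← Real.exp_add]
    congr 1
    rw [mul_left_comm, ← Real.exp_add]
    ring_nf
  calc _ ≤ ENNReal.ofReal (Real.exp D * Real.exp (birk φ k (prependWord u x))) *
        (oscE μ w (m + k) (prependWord u x) + c *
          (⨍⁻ z in B, ENNReal.ofReal |w z| ∂μ + oscE μ w (m + k) (prependWord u x))) *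
        (ENNReal.ofReal (c0 ^ 2 * Real.exp (D - birk φ k (prependWord u x))) * μ B) := by
        gcongr
        exact hμ.measure_cyl_le_prependWord hφ hθ hθ1 hu hm
    _ = ENNReal.ofReal (c0 ^ 2 * Real.exp (2 * D)) *
        (oscE μ w (m + k) (prependWord u x) * μ B + c *
          (μ B * ⨍⁻ z in B, ENNReal.ofReal |w z| ∂μ +
            oscE μ w (m + k) (prependWord u x) * μ B)) := by
        rw [← hK]
        ring
    _ ≤ _ := by
        rw [setLIntegral_oscE_cyl, measure_mul_setLAverage _ (measure_ne_top μ B)]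

lemma IsGibbsMeasure.lintegral_oscE_transfer_iterate_le [IsFiniteMeasure μ]
    (hμ : IsGibbsMeasure A φ c0 μ) (hφ : HasBoundedDistortion φ θ D) (hθ : 0 ≤ θ) (hθ1 : θ ≤ 1)
    (w : (ℕ → Fin l) → ℝ) (hm : 1 ≤ m) :
    ∫⁻ x, oscE μ ((transfer A φ)^[k] w) m x ∂μ ≤
      ENNReal.ofReal (c0 ^ 2 * Real.exp (2 * D)) *
        (∫⁻ x, oscE μ w (m + k) x ∂μ + ENNReal.ofReal (2 * D * θ ^ m) *
          (∫⁻ x, ENNReal.ofReal |w x| ∂μ + ∫⁻ x, oscE μ w (m + k) x ∂μ)) := by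
  rcases isEmpty_or_nonempty (ℕ → Fin l) with _ | ⟨⟨z⟩⟩
  · simp [lintegral_of_isEmpty]
  set c := ENNReal.ofReal (2 * D * θ ^ m)
  set B : (Fin k → Fin l) → (Fin m → Fin l) → Set (ℕ → Fin l) :=
    fun u v => cyl (prependWord u (prependWord v z)) (m + k)
  calc ∫⁻ x, oscE μ ((transfer A φ)^[k] w) m x ∂μ
      = ∑ v : Fin m → Fin l, oscE μ ((transfer A φ)^[k] w) m (prependWord v z) *
          μ (cyl (prependWord v z) m) :=
        lintegral_eq_sum_cyl (fun _ _ hy => oscE_eq_of_mem_cyl μ _ hy) z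
    _ ≤ ∑ v : Fin m → Fin l, ∑ u : Fin k → Fin l with AdmissiblePrefix A u (prependWord v z),
          ENNReal.ofReal (c0 ^ 2 * Real.exp (2 * D)) * (∫⁻ y in B u v, oscE μ w (m + k) y ∂μ +
            c * (∫⁻ y in B u v, ENNReal.ofReal |w y| ∂μ +
              ∫⁻ y in B u v, oscE μ w (m + k) y ∂μ)) := by
        refine Finset.sum_le_sum fun v _ => ?_
        refine (mul_le_mul_left (hμ.oscE_transfer_iterate_le hφ hθ hθ1 w _ hm) _).trans ?_
        rw [Finset.sum_mul]
        exact Finset.sum_le_sum fun u hu =>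
          hμ.mul_measure_cyl_le_setLIntegral hφ hθ hθ1 w (Finset.mem_filter.mp hu).2 hm c
    _ ≤ ENNReal.ofReal (c0 ^ 2 * Real.exp (2 * D)) *
          (∑ v : Fin m → Fin l, ∑ u : Fin k → Fin l, ∫⁻ y in B u v, oscE μ w (m + k) y ∂μ +
            c * (∑ v : Fin m → Fin l, ∑ u : Fin k → Fin l, ∫⁻ y in B u v, ENNReal.ofReal |w y| ∂μ +
              ∑ v : Fin m → Fin l, ∑ u : Fin k → Fin l, ∫⁻ y in B u v, oscE μ w (m + k) y ∂μ)) := by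
        simp only [Finset.mul_sum, ← Finset.sum_add_distrib]
        exact Finset.sum_le_sum fun v _ => Finset.sum_le_sum_of_subset (Finset.filter_subset _ _)
    _ ≤ _ := by gcongr <;> exact sum_setLIntegral_cyl_le _ z

lemma lintegral_oscE_le_thetaSemi (μ : Measure (ℕ → Fin l)) (w : (ℕ → Fin l) → ℝ) (hθ : 0 < θ)
    (hn : 1 ≤ n) : ∫⁻ x, oscE μ w n x ∂μ ≤ ENNReal.ofReal θ ^ n * thetaSemi μ θ w :=
  (ENNReal.inv_mul_le_iff (pow_ne_zero _ (ENNReal.ofReal_pos.mpr hθ).ne') (by simp)).mp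
    (le_iSup₂_of_le (f := fun n (_ : 1 ≤ n) => (ENNReal.ofReal θ ^ n)⁻¹ * ∫⁻ x, oscE μ w n x ∂μ)
      n hn le_rfl)

lemma IsGibbsMeasure.thetaSemi_transfer_iterate_le [IsFiniteMeasure μ]
    (hμ : IsGibbsMeasure A φ c0 μ) (hφ : HasBoundedDistortion φ θ D) (hθ : 0 < θ) (hθ1 : θ ≤ 1)
    (k : ℕ) (w : (ℕ → Fin l) → ℝ) :
    thetaSemi μ θ ((transfer A φ)^[k] w) ≤
      ENNReal.ofReal (c0 ^ 2 * Real.exp (2 * D) * (1 + 2 * D)) *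
        (ENNReal.ofReal θ ^ k * thetaSemi μ θ w + ∫⁻ x, ENNReal.ofReal |w x| ∂μ) := by
  rcases isEmpty_or_nonempty (ℕ → Fin l) with _ | ⟨⟨z⟩⟩
  · simp [thetaSemi, lintegral_of_isEmpty]
  refine iSup₂_le fun m hm => ?_
  set a := ENNReal.ofReal θ
  set K := ENNReal.ofReal (c0 ^ 2 * Real.exp (2 * D))
  set Q := ENNReal.ofReal (2 * D)
  set J := a ^ k * thetaSemi μ θ w
  set I := ∫⁻ x, oscE μ w (m + k) x ∂μ
  set L1 := ∫⁻ x, ENNReal.ofReal |w x| ∂μ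
  have hD := hφ.nonneg z
  have ha0 : a ^ m ≠ 0 := pow_ne_zero _ (ENNReal.ofReal_pos.mpr hθ).ne'
  have hatop : a ^ m ≠ ⊤ := by simp [a]
  have hIJ : I ≤ a ^ m * J := by
    rw [← mul_assoc, ← pow_add]
    exact lintegral_oscE_le_thetaSemi μ w hθ (by omega)
  have hI : I ≤ J := hIJ.trans (mul_le_of_le_one_left' (pow_le_one₀ (by simp [a]) (by simpa [a])))
  have hc : ENNReal.ofReal (2 * D * θ ^ m) = Q * a ^ m := by
    rw [ENNReal.ofReal_mul (by positivity), ENNReal.ofReal_pow hθ.le]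
  calc (a ^ m)⁻¹ * ∫⁻ x, oscE μ ((transfer A φ)^[k] w) m x ∂μ
      ≤ (a ^ m)⁻¹ * (K * (I + Q * a ^ m * (L1 + I))) := by
        rw [← hc]
        gcongr
        exact hμ.lintegral_oscE_transfer_iterate_le hφ hθ.le hθ1 w hm
    _ = K * ((a ^ m)⁻¹ * I + Q * (a ^ m * (a ^ m)⁻¹) * (L1 + I)) := by ring
    _ ≤ K * (J + Q * (L1 + J)) := by
        rw [ENNReal.mul_inv_cancel ha0 hatop, mul_one]
        gcongr
        exact (ENNReal.inv_mul_le_iff ha0 hatop).mpr hIJ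
    _ ≤ K * ((1 + Q) * (J + L1)) := by
        rw [add_mul, one_mul, add_comm L1 J]
        gcongr
        exact le_self_add
    _ = _ := by
        rw [← mul_assoc, ENNReal.ofReal_mul (by positivity), ENNReal.ofReal_add zero_le_one
          (by positivity), ENNReal.ofReal_one]

end Gibbs

theorem lasota_yorke_general {l : ℕ} (A : Fin l → Fin l → Bool)
    (θ : ℝ) (hθ : 0 < θ) (hθ1 : θ < 1)
    (φ : (ℕ → Fin l) → ℝ) (Kφ : ℝ)
    (hφ : ∀ x y : ℕ → Fin l, ∀ n : ℕ, (∀ i < n, x i = y i) → |φ x - φ y| ≤ Kφ * θ ^ n)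
    (μ : Measure (ℕ → Fin l)) [IsProbabilityMeasure μ]
    (hsupp : μ {x | ∀ n, A (x n) (x (n + 1)) = true} = 1)
    (c0 : ℝ) (hc0 : 1 < c0)
    (hGibbs : ∀ x : ℕ → Fin l, (∀ n, A (x n) (x (n + 1)) = true) → ∀ n : ℕ, 1 ≤ n →
      ENNReal.ofReal (c0⁻¹ * Real.exp (birk φ n x)) ≤ μ (cyl x n) ∧
      μ (cyl x n) ≤ ENNReal.ofReal (c0 * Real.exp (birk φ n x))) :
    ∃ c : ℝ, 0 < c ∧ ∀ k : ℕ, 1 ≤ k → ∀ w : (ℕ → Fin l) → ℝ, Measurable w →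
      thetaSemi μ θ ((transfer A φ)^[k] w) ≤
        ENNReal.ofReal c * (ENNReal.ofReal θ ^ k * thetaSemi μ θ w
          + ∫⁻ x, ENNReal.ofReal |w x| ∂μ) := by
  have hμ : IsGibbsMeasure A φ c0 μ :=
    { const_pos := by linarith
      ae_mem_admissibleSet :=
        (ae_iff_measure_eq (measurableSet_admissibleSet A).nullMeasurableSet).mpr
          (by rw [measure_univ]; exact hsupp)
      le_measure_cyl := fun x hx n hn => (hGibbs x hx n hn).1
      measure_cyl_le := fun x hx n hn => (hGibbs x hx n hn).2 }
  have hD := CylHolder.hasBoundedDistortion hφ hθ hθ1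
  obtain ⟨z⟩ := nonempty_of_isProbabilityMeasure μ
  have hD0 := hD.nonneg z
  exact ⟨_, by positivity, fun k _ w _ => hμ.thetaSemi_transfer_iterate_le hD hθ hθ1.le k w⟩

/-- Lasota–Yorke inequality: for the normalized transfer operator `L`
(`L1 = 1`) of a Hölder potential on a mixing SFT with Gibbs measure `μ`, there is
`c > 0` with `|L^k w|_θ ≤ c (θ^k |w|_θ + ‖w‖_{L¹(μ)})` for all `k ≥ 1`, `w ∈ B_θ`. -/
theorem lasota_yorke {l : ℕ} (A : Fin l → Fin l → Bool)
    (θ : ℝ) (hθ : 0 < θ) (hθ1 : θ < 1)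
    (φ : (ℕ → Fin l) → ℝ) (Kφ : ℝ)
    (hφ : ∀ x y : ℕ → Fin l, ∀ n : ℕ, (∀ i < n, x i = y i) → |φ x - φ y| ≤ Kφ * θ ^ n)
    (μ : Measure (ℕ → Fin l)) [IsProbabilityMeasure μ]
    (hsupp : μ {x | ∀ n, A (x n) (x (n + 1)) = true} = 1)
    (hnorm : ∀ x, transfer A φ (fun _ => 1) x = 1)
    (c0 : ℝ) (hc0 : 1 < c0)
    (hGibbs : ∀ x : ℕ → Fin l, (∀ n, A (x n) (x (n + 1)) = true) → ∀ n : ℕ, 1 ≤ n →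
      ENNReal.ofReal (c0⁻¹ * Real.exp (birk φ n x)) ≤ μ (cyl x n) ∧
      μ (cyl x n) ≤ ENNReal.ofReal (c0 * Real.exp (birk φ n x))) :
    ∃ c : ℝ, 0 < c ∧ ∀ k : ℕ, 1 ≤ k → ∀ w : (ℕ → Fin l) → ℝ, Measurable w →
      thetaSemi μ θ ((transfer A φ)^[k] w) ≤
        ENNReal.ofReal c * (ENNReal.ofReal θ ^ k * thetaSemi μ θ w
          + ∫⁻ x, ENNReal.ofReal |w x| ∂μ) :=
  lasota_yorke_general A θ hθ hθ1 φ Kφ hφ μ hsupp c0 hc0 hGibbs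

end
end
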